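/- Let n = c·2^L and suppose an n×n matrix T has the butterfly tensor representation t_{i_0…i_L j_0…j_L} = Σ_{r_1,…,r_{L+1}} s¹_{i_0…i_L r_1} · (Π_{m=1}^{L} s^{m+1}_{i_0…i_{L−m} j_0…j_{m−1} r_m r_{m+1}}) · s^{L+2}_{j_0…j_L r_{L+1}} with all ranks r_m ranging over {1,…,r}. Then for any fixed values of (i_0, …, i_{L−1}), the submatrix of T with rows {i : digits (i_0,…,i_{L−1})} and all columns has matrix rank at most r. -/

import Mathlib

/-!
Every row of the block has digits `(i_0,…,i_{L-1}) = d` and top digit `i_L`, so in the butterfly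
sum only the first core `s¹ d i_L r_1` depends on the row; everything else depends on the column
and the rank indices alone. Grouping the sum by `r_1` factors the block as a `c × r` matrix times
an `r × n` matrix.
-/

open Matrix

/-- Binary digit `i_m` (for `m < L`) of an index `i < c·2^L`, in the expansion
`i = i_L·2^L + Σ_{m<L} i_m·2^{L-1-m}`. -/
def bfDigit (c L : ℕ) (i : Fin (c * 2 ^ L)) (m : Fin L) : Fin 2 :=
  ⟨(i.val / 2 ^ (L - 1 - m.val)) % 2, by omega⟩

/-- Top digit `i_L ∈ {0, …, c−1}` of an index `i < c·2^L`. -/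
def bfTop (c L : ℕ) (i : Fin (c * 2 ^ L)) : Fin c :=
  ⟨i.val / 2 ^ L, Nat.div_lt_of_lt_mul
    (lt_of_lt_of_le i.isLt (le_of_eq (Nat.mul_comm c (2 ^ L))))⟩

/-- Re-encoding digits `(i_0,…,i_{L-1})` together with `i_L` gives an index `< c·2^L`. -/
lemma bfEncode_lt (c L : ℕ) (iL : Fin c) (d : Fin L → Fin 2) :
    iL.val * 2 ^ L + ∑ m : Fin L, (d m).val * 2 ^ (L - 1 - m.val) < c * 2 ^ L := by
  have hsum : (∑ m : Fin L, (d m).val * 2 ^ (L - 1 - m.val)) < 2 ^ L := by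
    have h1 : (∑ m : Fin L, (d m).val * 2 ^ (L - 1 - m.val))
        ≤ ∑ m : Fin L, 1 * 2 ^ (L - 1 - m.val) := by
      gcongr with m _
      exact Nat.lt_succ_iff.mp (d m).isLt
    have h2 : (∑ m : Fin L, 1 * 2 ^ (L - 1 - m.val)) = ∑ k ∈ Finset.range L, 2 ^ (L - 1 - k) := by
      simp only [one_mul]
      exact Fin.sum_univ_eq_sum_range (fun k => 2 ^ (L - 1 - k)) L
    have h3 : (∑ k ∈ Finset.range L, 2 ^ (L - 1 - k)) = ∑ k ∈ Finset.range L, 2 ^ k := by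
      exact Finset.sum_range_reflect (fun k => 2 ^ k) L
    have h4 : ∀ n : ℕ, (∑ k ∈ Finset.range n, 2 ^ k) = 2 ^ n - 1 := by
      intro n
      induction n with
      | zero => simp
      | succ n ih =>
        rw [Finset.sum_range_succ, ih]
        have := Nat.one_le_two_pow (n := n)
        rw [pow_succ]
        omega
    have h5 : (1 : ℕ) ≤ 2 ^ L := Nat.one_le_two_pow
    rw [h2, h3, h4 L] at h1
    omega
  have hiL : iL.val + 1 ≤ c := iL.isLt
  calc iL.val * 2 ^ L + ∑ m : Fin L, (d m).val * 2 ^ (L - 1 - m.val)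
      < iL.val * 2 ^ L + 2 ^ L := Nat.add_lt_add_left hsum _
    _ = (iL.val + 1) * 2 ^ L := by ring
    _ ≤ c * 2 ^ L := Nat.mul_le_mul_right _ hiL

/-- The index with digits `(i_0,…,i_{L-1})` and top digit `i_L`. -/
def bfEncode (c L : ℕ) (iL : Fin c) (d : Fin L → Fin 2) : Fin (c * 2 ^ L) :=
  ⟨iL.val * 2 ^ L + ∑ m : Fin L, (d m).val * 2 ^ (L - 1 - m.val), bfEncode_lt c L iL d⟩

namespace Nat

variable {b : ℕ}

theorem sum_fin_mul_pow_lt {n : ℕ} (g : Fin n → ℕ) (hg : ∀ k, g k < b) :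
    ∑ k, g k * b ^ (k : ℕ) < b ^ n := by
  induction n with
  | zero => simp
  | succ n ih =>
    rw [Fin.sum_univ_castSucc]
    have hlow := ih (fun k => g k.castSucc) fun k => hg _
    have hlast : g (Fin.last n) + 1 ≤ b := hg _
    calc ∑ k : Fin n, g k.castSucc * b ^ (k : ℕ) + g (Fin.last n) * b ^ n
        < b ^ n + g (Fin.last n) * b ^ n := by simpa using hlow
      _ = (g (Fin.last n) + 1) * b ^ n := by ring
      _ ≤ b * b ^ n := Nat.mul_le_mul_right _ hlast
      _ = b ^ (n + 1) := by ring

theorem add_sum_fin_mul_pow_div_pow {n : ℕ} (a : ℕ) (g : Fin n → ℕ) (hg : ∀ k, g k < b) :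
    (a * b ^ n + ∑ k, g k * b ^ (k : ℕ)) / b ^ n = a := by
  have hpos : 0 < b ^ n := (Nat.zero_le _).trans_lt (sum_fin_mul_pow_lt g hg)
  rw [add_comm, Nat.add_mul_div_right _ _ hpos, Nat.div_eq_of_lt (sum_fin_mul_pow_lt g hg),
    zero_add]

theorem add_sum_fin_mul_pow_div_pow_mod {n : ℕ} (a : ℕ) (g : Fin n → ℕ) (hg : ∀ k, g k < b)
    (j : Fin n) : (a * b ^ n + ∑ k, g k * b ^ (k : ℕ)) / b ^ (j : ℕ) % b = g j := by
  induction n generalizing a with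
  | zero => exact j.elim0
  | succ n ih =>
    have hsplit : a * b ^ (n + 1) + ∑ k, g k * b ^ (k : ℕ)
        = (a * b + g (Fin.last n)) * b ^ n + ∑ k : Fin n, g k.castSucc * b ^ (k : ℕ) := by
      rw [Fin.sum_univ_castSucc]; simp only [Fin.val_castSucc, Fin.val_last]; ring
    rw [hsplit]
    cases j using Fin.lastCases with
    | last =>
      rw [Fin.val_last, add_sum_fin_mul_pow_div_pow _ _ fun k => hg _,
        Nat.mul_add_mod_self_right, Nat.mod_eq_of_lt (hg _)]
    | cast j => exact ih _ (fun k => g k.castSucc) (fun k => hg _) j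

end Nat

theorem Matrix.rank_le_card_of_eq_sum {m n κ ι R : Type*} [Fintype n] [Fintype κ] [Fintype ι]
    [CommRing R] [Nontrivial R] (M : Matrix m n R) (A : Matrix m κ R) (π : ι → κ)
    (F : ι → n → R) (hM : ∀ i j, M i j = ∑ x, A i (π x) * F x j) :
    M.rank ≤ Fintype.card κ := by
  classical
  have hfactor : M = A * Matrix.of fun k j => ∑ x with π x = k, F x j := by
    ext i j
    rw [hM, Matrix.mul_apply, ← Finset.sum_fiberwise Finset.univ π]
    refine Finset.sum_congr rfl fun k _ => ?_
    rw [Matrix.of_apply, Finset.mul_sum]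
    exact Finset.sum_congr rfl fun x hx => by rw [(Finset.mem_filter.1 hx).2]
  rw [hfactor]
  exact (Matrix.rank_mul_le_left _ _).trans (Matrix.rank_le_card_width A)

section Butterfly

variable {c L : ℕ}

theorem bfEncode_val (iL : Fin c) (d : Fin L → Fin 2) :
    (bfEncode c L iL d : ℕ) = iL * 2 ^ L + ∑ k : Fin L, (d k.rev : ℕ) * 2 ^ (k : ℕ) := by
  rw [bfEncode, Fin.val_mk, ← Equiv.sum_comp Fin.revPerm]
  refine congrArg (_ + ·) (Finset.sum_congr rfl fun k _ => ?_)
  rw [Fin.revPerm_apply, Fin.val_rev]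
  congr 2
  omega

@[simp]
theorem bfDigit_bfEncode (iL : Fin c) (d : Fin L → Fin 2) :
    bfDigit c L (bfEncode c L iL d) = d := by
  funext m
  have hexp : L - 1 - (m : ℕ) = m.rev := by rw [Fin.val_rev]; omega
  apply Fin.ext
  rw [bfDigit, Fin.val_mk, hexp, bfEncode_val,
    Nat.add_sum_fin_mul_pow_div_pow_mod _ _ fun k => (d k.rev).isLt, Fin.rev_rev]

@[simp]
theorem bfTop_bfEncode (iL : Fin c) (d : Fin L → Fin 2) : bfTop c L (bfEncode c L iL d) = iL := by
  apply Fin.ext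
  rw [bfTop, Fin.val_mk, bfEncode_val,
    Nat.add_sum_fin_mul_pow_div_pow _ _ fun k => (d k.rev).isLt]

end Butterfly

/-- If an `n×n` matrix `T`, `n = c·2^L`, admits a butterfly tensor representation with all
ranks in `{1,…,r}`, then for each fixed `(i_0,…,i_{L-1})` the submatrix of `T` consisting
of the rows with those digits (and all columns) has matrix rank at most `r`. -/
theorem butterfly_row_block_rank_le (c L r : ℕ)
    (T : Matrix (Fin (c * 2 ^ L)) (Fin (c * 2 ^ L)) ℝ)
    (s1 : (Fin L → Fin 2) → Fin c → Fin r → ℝ)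
    (score : (mm : Fin L) → (Fin (L - mm.val) → Fin 2) → (Fin (mm.val + 1) → Fin 2) →
      Fin r → Fin r → ℝ)
    (sL2 : (Fin L → Fin 2) → Fin c → Fin r → ℝ)
    (hT : ∀ i j : Fin (c * 2 ^ L),
      T i j = ∑ ρ : Fin (L + 1) → Fin r,
        s1 (bfDigit c L i) (bfTop c L i) (ρ 0) *
        (∏ mm : Fin L,
          score mm
            (fun a => bfDigit c L i ⟨a.val, by have := a.isLt; have := mm.isLt; omega⟩)
            (fun b => bfDigit c L j ⟨b.val, by have := b.isLt; have := mm.isLt; omega⟩)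
            (ρ mm.castSucc) (ρ mm.succ)) *
        sL2 (bfDigit c L j) (bfTop c L j) (ρ (Fin.last L))) :
    ∀ d : Fin L → Fin 2,
      (T.submatrix (fun iL : Fin c => bfEncode c L iL d) id).rank ≤ r := by
  intro d
  refine (Matrix.rank_le_card_of_eq_sum _ (s1 d) (fun ρ : Fin (L + 1) → Fin r => ρ 0) ?F
    fun iL j => ?entry).trans_eq (Fintype.card_fin r)
  -- the right factor `?F` is found by unification once the block's digits are decoded
  case entry =>
    simp only [submatrix_apply, id, hT, bfDigit_bfEncode, bfTop_bfEncode, mul_assoc]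
    rfl
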